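/- arXiv:2308.00835 — 8 statements merged into one kernel-verified Lean document; each statement's English description precedes it below -/
import Mathlib

section
/- Let k be a commutative ring, A a unital associative k-algebra, and E a left A-module. Define k-linear maps φ₁ : A ⊗_k A ⊗_k E → A ⊗_k E by φ₁(a ⊗ b ⊗ e) = a ⊗ (b·e) − (ab) ⊗ e, and φ₂ : A ⊗_k A ⊗_k E → A ⊗_k A ⊗_k E by φ₂(a ⊗ b ⊗ e) = 1 ⊗ a ⊗ (b·e) − 1 ⊗ (ab) ⊗ e − a ⊗ 1 ⊗ (b·e) + a ⊗ b ⊗ e. Then the k-linear map ι : A ⊗_k E → A ⊗_k A ⊗_k E given by ι(a ⊗ e) = a ⊗ 1 ⊗ e is injective, and its range equals ker φ₁ ∩ ker φ₂. -/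
open scoped TensorProduct

/-- core computation of Theorem 2.2: for a `k`-algebra `A` and a left
`A`-module `E`, the map `ι : A ⊗[k] E → A ⊗[k] A ⊗[k] E`, `a ⊗ e ↦ a ⊗ 1 ⊗ e` is injective
with range `ker φ₁ ⊓ ker φ₂`, where `φ₁ (a ⊗ b ⊗ e) = a ⊗ (b • e) - (a * b) ⊗ e` and
`φ₂ (a ⊗ b ⊗ e) = 1 ⊗ a ⊗ (b • e) - 1 ⊗ (a * b) ⊗ e - a ⊗ 1 ⊗ (b • e) + a ⊗ b ⊗ e`. -/
theorem stmt0 (k A E : Type*) [CommRing k] [Ring A] [Algebra k A]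
    [AddCommGroup E] [Module k E] [Module A E] [IsScalarTower k A E]
    (φ₁ : A ⊗[k] (A ⊗[k] E) →ₗ[k] A ⊗[k] E)
    (hφ₁ : ∀ (a b : A) (e : E),
      φ₁ (a ⊗ₜ (b ⊗ₜ e)) = a ⊗ₜ (b • e) - (a * b) ⊗ₜ e)
    (φ₂ : A ⊗[k] (A ⊗[k] E) →ₗ[k] A ⊗[k] (A ⊗[k] E))
    (hφ₂ : ∀ (a b : A) (e : E),
      φ₂ (a ⊗ₜ (b ⊗ₜ e)) =
        (1 : A) ⊗ₜ (a ⊗ₜ (b • e)) - (1 : A) ⊗ₜ ((a * b) ⊗ₜ e)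
          - a ⊗ₜ ((1 : A) ⊗ₜ (b • e)) + a ⊗ₜ (b ⊗ₜ e))
    (ι : A ⊗[k] E →ₗ[k] A ⊗[k] (A ⊗[k] E))
    (hι : ∀ (a : A) (e : E), ι (a ⊗ₜ e) = a ⊗ₜ ((1 : A) ⊗ₜ e)) :
    Function.Injective ι ∧
      LinearMap.range ι = LinearMap.ker φ₁ ⊓ LinearMap.ker φ₂ := by
  -- the action A ⊗ E → E as a k-linear map
  let f : A →ₗ[k] E →ₗ[k] E :=
    { toFun := fun a =>
        { toFun := fun e => a • e
          map_add' := fun x y => smul_add a x y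
          map_smul' := fun c x => (smul_comm c a x).symm }
      map_add' := fun a b => by ext e; exact add_smul a b e
      map_smul' := fun c a => by ext e; exact smul_assoc c a e }
  let m : A ⊗[k] E →ₗ[k] E := TensorProduct.lift f
  have hm : ∀ (b : A) (e : E), m (b ⊗ₜ e) = b • e := fun b e => rfl
  -- retraction r : A ⊗ (A ⊗ E) → A ⊗ E
  let r : A ⊗[k] (A ⊗[k] E) →ₗ[k] A ⊗[k] E := LinearMap.lTensor A m
  have hr : ∀ (a b : A) (e : E), r (a ⊗ₜ (b ⊗ₜ e)) = a ⊗ₜ (b • e) := fun a b e => rfl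
  have hretr : r ∘ₗ ι = LinearMap.id := by
    apply TensorProduct.ext'
    intro a e
    simp [hι, hr, one_smul]
  have hinj : Function.Injective ι := by
    have hli : Function.LeftInverse r ι := fun x => by
      simpa using LinearMap.congr_fun hretr x
    exact hli.injective
  refine ⟨hinj, ?_⟩
  -- key identity: φ₂ = (1 ⊗ₜ ·) ∘ φ₁ - ι ∘ r + id
  have key : φ₂ = (TensorProduct.mk k A (A ⊗[k] E) 1) ∘ₗ φ₁ - ι ∘ₗ r + LinearMap.id := by
    apply TensorProduct.ext'
    intro a t
    induction t using TensorProduct.induction_on with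
    | zero => simp
    | tmul b e =>
        simp only [hφ₂, LinearMap.add_apply, LinearMap.sub_apply, LinearMap.comp_apply,
          hφ₁, hr, hι, LinearMap.id_apply, TensorProduct.mk_apply, TensorProduct.tmul_sub]
    | add x y hx hy =>
        simp only [TensorProduct.tmul_add, map_add] at hx hy ⊢
        rw [hx, hy]
  apply le_antisymm
  · rintro _ ⟨x, rfl⟩
    constructor
    · -- φ₁ ∘ ι = 0
      have : φ₁ ∘ₗ ι = 0 := by
        apply TensorProduct.ext'
        intro a e
        simp [hι, hφ₁, one_smul, mul_one]
      exact LinearMap.congr_fun this x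
    · have : φ₂ ∘ₗ ι = 0 := by
        apply TensorProduct.ext'
        intro a e
        simp only [LinearMap.comp_apply, hι, hφ₂, one_smul, mul_one, LinearMap.zero_apply]
        abel
      exact LinearMap.congr_fun this x
  · rintro x ⟨hx1, hx2⟩
    refine ⟨r x, ?_⟩
    have h1 : φ₁ x = 0 := hx1
    have h2 : φ₂ x = 0 := hx2
    have := LinearMap.congr_fun key x
    simp only [LinearMap.add_apply, LinearMap.sub_apply, LinearMap.comp_apply,
      LinearMap.id_apply, h1, h2, map_zero] at this
    -- this : 0 = 0 - ι (r x) + x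
    have h3 := this.symm
    rw [zero_sub, neg_add_eq_zero] at h3
    exact h3
end

section
/- Let k be a commutative ring, A a unital associative k-algebra, and (Ω, d) a first-order differential calculus over A. Then the map sending a left A-linear map θ : Ω → A to the k-linear map θ ∘ d : A → A is injective, and its range is exactly the set 𝔛_d of vector fields. Consequently, for every vector field X there is a unique left A-linear map θ_X : Ω → A with θ_X ∘ d = X. -/
open MulOpposite

section

variable {k A Ω : Type*} [CommRing k] [Ring A] [Algebra k A]
  [AddCommGroup Ω] [Module k Ω] [Module A Ω] [Module Aᵐᵒᵖ Ω]
  [SMulCommClass A Aᵐᵒᵖ Ω] [IsScalarTower k A Ω] [IsScalarTower k Aᵐᵒᵖ Ω]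

/-- A `k`-linear map `X : A → A` is a first-order differential operator (with respect to
a first-order calculus `d : A → Ω`) if for every finite family `(aᵢ, bᵢ)` with
`∑ aᵢbᵢ = 0` and `∑ aᵢ • d bᵢ = 0` one has `∑ aᵢ • X bᵢ = 0`. -/
def IsFirstOrderOp (d : A →ₗ[k] Ω) (X : A →ₗ[k] A) : Prop :=
  ∀ (n : ℕ) (a b : Fin n → A),
    ∑ i, a i * b i = 0 → ∑ i, a i • d (b i) = 0 → ∑ i, a i * X (b i) = 0

/-- `X` is a vector field for `d` if it is a first-order differential operator
vanishing on `ker d`. -/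
def IsVectorField (d : A →ₗ[k] Ω) (X : A →ₗ[k] A) : Prop :=
  (∀ a : A, d a = 0 → X a = 0) ∧ IsFirstOrderOp d X

private lemma aux_finset_sum (d : A →ₗ[k] Ω) (X : A →ₗ[k] A)
    (hX : IsVectorField d X) (hd1 : d 1 = 0) {ι : Type*} (s : Finset ι)
    (a b : ι → A) (h : ∑ i ∈ s, a i • d (b i) = 0) :
    ∑ i ∈ s, a i * X (b i) = 0 := by
  classical
  set c : A := ∑ i ∈ s, a i * b i with hc
  set n := s.card with hn
  let e : Fin n ≃ s := s.equivFin.symm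
  have hsumA : ∀ (f : ι → A), ∑ j : Fin n, f (e j) = ∑ i ∈ s, f i := by
    intro f
    rw [← Finset.sum_coe_sort s f]
    exact Equiv.sum_comp e (fun x : s => f (x : ι))
  have hsumO : ∀ (f : ι → Ω), ∑ j : Fin n, f (e j) = ∑ i ∈ s, f i := by
    intro f
    rw [← Finset.sum_coe_sort s f]
    exact Equiv.sum_comp e (fun x : s => f (x : ι))
  set a' : Fin (n + 1) → A := Fin.cons (-c) (fun j => a (e j)) with ha'
  set b' : Fin (n + 1) → A := Fin.cons 1 (fun j => b (e j)) with hb'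
  have h1 : ∑ i, a' i * b' i = 0 := by
    rw [ha', hb', Fin.sum_univ_succ]
    simp only [Fin.cons_zero, Fin.cons_succ]
    simp only [mul_one]
    have h0 := hsumA (fun i => a i * b i)
    rw [h0, ← hc]
    exact neg_add_cancel c
  have h2 : ∑ i, a' i • d (b' i) = 0 := by
    rw [ha', hb', Fin.sum_univ_succ]
    simp only [Fin.cons_zero, Fin.cons_succ]
    have h0 := hsumO (fun i => a i • d (b i))
    rw [h0, h, hd1]
    simp
  have h3 := hX.2 (n + 1) a' b' h1 h2
  rw [ha', hb', Fin.sum_univ_succ] at h3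
  simp only [Fin.cons_zero, Fin.cons_succ] at h3
  have hX1 : X 1 = 0 := hX.1 1 hd1
  rw [hX1, mul_zero, zero_add] at h3
  have h0 := hsumA (fun i => a i * X (b i))
  rw [← h0]
  exact h3

/-- Proposition 6.3(i): for a first-order differential calculus
`(Ω, d)` over `A`, the map `θ ↦ θ ∘ d` from `Hom_A(Ω, A)` to `k`-linear endomorphisms
of `A` is injective with range exactly the vector fields `𝔛_d`; consequently every
vector field `X` has a unique `A`-linear `θ_X : Ω → A` with `θ_X ∘ d = X`. -/
theorem stmt4 (d : A →ₗ[k] Ω)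
    (hleib : ∀ a b : A, d (a * b) = a • d b + op b • d a)
    (hspan : Submodule.span A (Set.range ⇑d) = ⊤) :
    Function.Injective (fun θ : Ω →ₗ[A] A => (θ.restrictScalars k) ∘ₗ d) ∧
    (Set.range fun θ : Ω →ₗ[A] A => (θ.restrictScalars k) ∘ₗ d) =
      {X : A →ₗ[k] A | IsVectorField d X} ∧
    ∀ X : A →ₗ[k] A, IsVectorField d X →
      ∃! θ : Ω →ₗ[A] A, (θ.restrictScalars k) ∘ₗ d = X := by
  classical
  have hd1 : d 1 = 0 := by
    have h := hleib 1 1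
    simp only [one_mul, one_smul, op_one] at h
    exact left_eq_add.mp h
  have hinj : Function.Injective
      (fun θ : Ω →ₗ[A] A => (θ.restrictScalars k) ∘ₗ d) := by
    intro θ₁ θ₂ h
    apply LinearMap.ext_on hspan
    rintro x ⟨a, rfl⟩
    exact DFunLike.congr_fun h a
  have hmem : ∀ θ : Ω →ₗ[A] A, IsVectorField d ((θ.restrictScalars k) ∘ₗ d) := by
    intro θ
    constructor
    · intro a ha
      simp [LinearMap.comp_apply, ha]
    · intro n a b _ h2
      have h3 : θ (∑ i, a i • d (b i)) = 0 := by rw [h2]; exact map_zero θ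
      rw [map_sum] at h3
      simpa [smul_eq_mul] using h3
  have hconstr : ∀ X : A →ₗ[k] A, IsVectorField d X →
      ∃ θ : Ω →ₗ[A] A, (θ.restrictScalars k) ∘ₗ d = X := by
    intro X hX
    set π : (A →₀ A) →ₗ[A] Ω := Finsupp.linearCombination A ⇑d with hπ
    set g : (A →₀ A) →ₗ[A] A := Finsupp.linearCombination A ⇑X with hg
    have hπsurj : Function.Surjective π := by
      rw [← LinearMap.range_eq_top, hπ, Finsupp.range_linearCombination, hspan]
    have hker : LinearMap.ker π ≤ LinearMap.ker g := by
      intro l hl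
      rw [LinearMap.mem_ker] at hl ⊢
      have hl' : ∑ b ∈ l.support, l b • d b = 0 := by
        rwa [hπ, Finsupp.linearCombination_apply, Finsupp.sum] at hl
      have h4 := aux_finset_sum d X hX hd1 l.support (fun b => l b) id
        (by simpa using hl')
      rw [hg, Finsupp.linearCombination_apply, Finsupp.sum]
      simpa [smul_eq_mul] using h4
    set e := LinearMap.quotKerEquivOfSurjective π hπsurj with he
    have hm : ∀ l : A →₀ A, e (Submodule.Quotient.mk l) = π l := by
      intro l
      rfl
    refine ⟨(Submodule.liftQ _ g hker).comp e.symm.toLinearMap, ?_⟩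
    ext a
    have hda : π (Finsupp.single a 1) = d a := by
      simp [hπ, Finsupp.linearCombination_single]
    have hsymm : e.symm (d a) = Submodule.Quotient.mk (Finsupp.single a 1) := by
      rw [LinearEquiv.symm_apply_eq, hm, hda]
    show (Submodule.liftQ _ g hker) (e.symm (d a)) = X a
    rw [hsymm, Submodule.liftQ_apply, hg, Finsupp.linearCombination_single]
    simp
  refine ⟨hinj, ?_, ?_⟩
  · ext X
    constructor
    · rintro ⟨θ, rfl⟩
      exact hmem θ
    · intro hX
      exact hconstr X hX
  · intro X hX
    obtain ⟨θ, hθ⟩ := hconstr X hX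
    exact ⟨θ, hθ, fun θ' hθ' => hinj (hθ'.trans hθ.symm)⟩



end
end

section
/- Let k be a commutative ring, A a unital associative k-algebra, and (Ω, d) a first-order differential calculus over A. Consider the k-linear operator T on the space of first-order differential operators Δ : A → A defined by T(Δ)(a) = Δ(a) − a·Δ(1) for a ∈ A. Then a first-order differential operator Δ is a vector field if and only if T(Δ) = Δ, i.e. the set of vector fields 𝔛_d is precisely the 1-eigenspace of T. -/
open MulOpposite

section

variable {k A Ω : Type*} [CommRing k] [Ring A] [Algebra k A]
  [AddCommGroup Ω] [Module k Ω] [Module A Ω] [Module Aᵐᵒᵖ Ω]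
  [SMulCommClass A Aᵐᵒᵖ Ω] [IsScalarTower k A Ω] [IsScalarTower k Aᵐᵒᵖ Ω]

/-- Proposition 6.3(ii): the vector fields are exactly the
1-eigenspace of the operator `T` on first-order differential operators given by
`T(Δ)(a) = Δ a - a * Δ 1`: a first-order operator `Δ` is a vector field iff `T Δ = Δ`. -/
theorem stmt5 (d : A →ₗ[k] Ω)
    (hleib : ∀ a b : A, d (a * b) = a • d b + op b • d a)
    (hspan : Submodule.span A (Set.range ⇑d) = ⊤)
    (Δ : A →ₗ[k] A) (hΔ : IsFirstOrderOp d Δ) :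
    IsVectorField d Δ ↔ ∀ a : A, Δ a - a * Δ 1 = Δ a := by
  have hd1 : d 1 = 0 := by
    have := hleib 1 1
    simp only [one_mul, one_smul, op_one] at this
    exact left_eq_add.mp this
  constructor
  · rintro ⟨hker, -⟩ a
    rw [hker 1 hd1, mul_zero, sub_zero]
  · intro hT
    refine ⟨?_, hΔ⟩
    intro a ha
    have key := hΔ 2 ![1, -a] ![a, 1] (by simp) (by simp [ha, hd1])
    simp [Fin.sum_univ_two] at key
    have hΔ1 : a * Δ 1 = 0 := sub_eq_self.mp (hT a)
    -- key : Δ a + -(a * Δ 1) = 0 or similar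
    rw [hΔ1] at key
    simpa using key

end
end

section
/- Let k be a commutative ring, A a unital associative k-algebra, and (Ω, d) a first-order differential calculus over A. Define a right action of A on vector fields by (X·a)(b) := X(b)·a and a left action by (a·X)(b) := θ_X((db)·a), for a, b ∈ A and X ∈ 𝔛_d. Then: (1) both a·X and X·a are again vector fields; (2) (ab)·X = a·(b·X) and ((a·X)·b) = a·(X·b) for all a, b ∈ A, so 𝔛_d is an A-bimodule; and (3) the bijection X ↦ θ_X onto the left A-linear maps Ω → A is A-bilinear, where Hom_A(Ω, A) carries the actions (a·θ)(ω) = θ(ω·a) and (θ·a)(ω) = θ(ω)·a. -/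
open MulOpposite

section

variable {k A Ω : Type*} [CommRing k] [Ring A] [Algebra k A]
  [AddCommGroup Ω] [Module k Ω] [Module A Ω] [Module Aᵐᵒᵖ Ω]
  [SMulCommClass A Aᵐᵒᵖ Ω] [IsScalarTower k A Ω] [IsScalarTower k Aᵐᵒᵖ Ω]

/-- `ω ↦ θ (op a • ω)` as a left `A`-linear map. -/
def shiftMap {A Ω : Type*} [Ring A]
    [AddCommGroup Ω] [Module A Ω] [Module Aᵐᵒᵖ Ω] [SMulCommClass A Aᵐᵒᵖ Ω]
    (θ : Ω →ₗ[A] A) (a : A) : Ω →ₗ[A] A where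
  toFun ω := θ (op a • ω)
  map_add' x y := by show θ (op a • (x + y)) = _; rw [smul_add, map_add]
  map_smul' c x := by show θ (op a • c • x) = c • θ (op a • x); rw [← smul_comm c (op a) x, map_smul]

/-- `ω ↦ θ ω * a` as a left `A`-linear map. -/
def rmulMap {A Ω : Type*} [Ring A]
    [AddCommGroup Ω] [Module A Ω]
    (θ : Ω →ₗ[A] A) (a : A) : Ω →ₗ[A] A where
  toFun ω := θ ω * a
  map_add' x y := by show θ (x + y) * a = _; rw [map_add, add_mul]
  map_smul' c x := by show θ (c • x) * a = c • (θ x * a); rw [map_smul, smul_eq_mul, smul_eq_mul, mul_assoc]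

lemma ext_span {k A Ω : Type*} [CommRing k] [Ring A] [Algebra k A]
    [AddCommGroup Ω] [Module k Ω] [Module A Ω]
    (d : A →ₗ[k] Ω) (hspan : Submodule.span A (Set.range ⇑d) = ⊤)
    (θ₁ θ₂ : Ω →ₗ[A] A) (h : ∀ c : A, θ₁ (d c) = θ₂ (d c)) : θ₁ = θ₂ := by
  apply LinearMap.ext_on hspan
  rintro x ⟨c, rfl⟩
  exact h c

/-- Propositions 6.2 and 6.4: with the right action `(X·a)(b) = X(b)·a`
and the left action `(a·X)(b) = θ_X((db)·a)`, the vector fields form an `A`-bimodule,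
and the bijection `X ↦ θ_X` onto `Hom_A(Ω, A)` is `A`-bilinear for the actions
`(a·θ)(ω) = θ(ω·a)`, `(θ·a)(ω) = θ(ω)·a`. Here `θ_X` is the unique `A`-linear map with
`θ_X ∘ d = X`, and `ω·a = op a • ω` denotes the right `A`-action on `Ω`. -/
theorem stmt6 (d : A →ₗ[k] Ω)
    (hleib : ∀ a b : A, d (a * b) = a • d b + op b • d a)
    (hspan : Submodule.span A (Set.range ⇑d) = ⊤) :
    -- (1) the right action `X·a` is again a vector field
    (∀ X : A →ₗ[k] A, IsVectorField d X → ∀ a : A, ∀ Y : A →ₗ[k] A,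
      (∀ b : A, Y b = X b * a) → IsVectorField d Y) ∧
    -- (1') the left action `a·X` is again a vector field
    (∀ (X : A →ₗ[k] A) (θ : Ω →ₗ[A] A), IsVectorField d X → (∀ b : A, θ (d b) = X b) →
      ∀ a : A, ∀ Y : A →ₗ[k] A,
      (∀ b : A, Y b = θ (op a • d b)) → IsVectorField d Y) ∧
    -- (2) associativity `(a*b)·X = a·(b·X)` of the left action
    (∀ (X : A →ₗ[k] A) (θ : Ω →ₗ[A] A), IsVectorField d X → (∀ c : A, θ (d c) = X c) →
      ∀ a b : A, ∀ θ' : Ω →ₗ[A] A,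
      (∀ c : A, θ' (d c) = θ (op b • d c)) →
      ∀ c : A, θ (op (a * b) • d c) = θ' (op a • d c)) ∧
    -- (2') compatibility `(a·X)·b = a·(X·b)` of the two actions
    (∀ (X : A →ₗ[k] A) (θ : Ω →ₗ[A] A), IsVectorField d X → (∀ c : A, θ (d c) = X c) →
      ∀ a b : A, ∀ θ'' : Ω →ₗ[A] A,
      (∀ c : A, θ'' (d c) = X c * b) →
      ∀ c : A, θ (op a • d c) * b = θ'' (op a • d c)) ∧
    -- (3) `A`-bilinearity of `X ↦ θ_X` : `θ_{a·X} = a·θ_X` and `θ_{X·a} = θ_X·a`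
    (∀ (X : A →ₗ[k] A) (θ : Ω →ₗ[A] A), IsVectorField d X → (∀ c : A, θ (d c) = X c) →
      ∀ a : A,
      (∀ θ' : Ω →ₗ[A] A, (∀ c : A, θ' (d c) = θ (op a • d c)) →
        ∀ ω : Ω, θ' ω = θ (op a • ω)) ∧
      (∀ θ'' : Ω →ₗ[A] A, (∀ c : A, θ'' (d c) = X c * a) →
        ∀ ω : Ω, θ'' ω = θ ω * a)) := by
  have key : ∀ (θ θ' : Ω →ₗ[A] A) (a : A),
      (∀ c : A, θ' (d c) = θ (op a • d c)) → ∀ ω : Ω, θ' ω = θ (op a • ω) := by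
    intro θ θ' a h ω
    have : θ' = shiftMap θ a := ext_span d hspan _ _ (fun c => h c)
    rw [this]; rfl
  have key2 : ∀ (θ θ'' : Ω →ₗ[A] A) (a : A),
      (∀ c : A, θ'' (d c) = θ (d c) * a) → ∀ ω : Ω, θ'' ω = θ ω * a := by
    intro θ θ'' a h ω
    have : θ'' = rmulMap θ a := ext_span d hspan _ _ (fun c => h c)
    rw [this]; rfl
  refine ⟨?_, ?_, ?_, ?_, ?_⟩
  · rintro X ⟨hX0, hX1⟩ a Y hY
    refine ⟨fun b hb => by rw [hY, hX0 b hb, zero_mul], ?_⟩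
    intro n f g h1 h2
    have := hX1 n f g h1 h2
    calc ∑ i, f i * Y (g i) = (∑ i, f i * X (g i)) * a := by
          rw [Finset.sum_mul]; exact Finset.sum_congr rfl fun i _ => by
            rw [hY, mul_assoc]
      _ = 0 := by rw [this, zero_mul]
  · rintro X θ ⟨hX0, hX1⟩ hθ a Y hY
    refine ⟨fun b hb => by rw [hY, hb, smul_zero, map_zero], ?_⟩
    intro n f g h1 h2
    have hYσ : ∀ b, Y b = shiftMap θ a (d b) := hY
    calc ∑ i, f i * Y (g i) = shiftMap θ a (∑ i, f i • d (g i)) := by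
          rw [map_sum]; exact Finset.sum_congr rfl fun i _ => by
            rw [hYσ, ← smul_eq_mul, ← map_smul]
      _ = 0 := by rw [h2, map_zero]
  · intro X θ hX hθ a b θ' hθ' c
    rw [key θ θ' b hθ' (op a • d c), ← mul_smul, ← op_mul]
  · intro X θ hX hθ a b θ'' hθ'' c
    rw [key2 θ θ'' b (fun c => by rw [hθ'' c, hθ c]) (op a • d c)]
  · intro X θ hX hθ a
    exact ⟨fun θ' hθ' => key θ θ' a hθ',
      fun θ'' hθ'' => key2 θ θ'' a (fun c => by rw [hθ'' c, hθ c])⟩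

end
end

section
/- Let k be a commutative ring, A a unital associative k-algebra, and (Ω, d) a first-order differential calculus over A. The interior product ⟨ω, X⟩ := θ_X(ω) satisfies: (1) ⟨ω·a, X⟩ = ⟨ω, a·X⟩ for all a ∈ A, ω ∈ Ω, X ∈ 𝔛_d, so it descends to a well-defined map Ω ⊗_A 𝔛_d → A; (2) this map is A-bilinear: ⟨a·ω, X⟩ = a·⟨ω, X⟩ and ⟨ω, X·a⟩ = ⟨ω, X⟩·a; and (3) it is nondegenerate in its right component: if ⟨ω, X⟩ = 0 for all ω ∈ Ω then X = 0. -/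
open MulOpposite

section

variable {k A Ω : Type*} [CommRing k] [Ring A] [Algebra k A]
  [AddCommGroup Ω] [Module k Ω] [Module A Ω] [Module Aᵐᵒᵖ Ω]
  [SMulCommClass A Aᵐᵒᵖ Ω] [IsScalarTower k A Ω] [IsScalarTower k Aᵐᵒᵖ Ω]

/-- Proposition 6.10: the interior product `⟨ω, X⟩ := θ_X ω`
(1) satisfies `⟨ω·a, X⟩ = ⟨ω, a·X⟩`, hence descends to `Ω ⊗_A 𝔛_d → A`;
(2) is `A`-bilinear: `⟨a·ω, X⟩ = a·⟨ω, X⟩` and `⟨ω, X·a⟩ = ⟨ω, X⟩·a`;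
(3) is nondegenerate in its right component: `⟨-, X⟩ = 0` forces `X = 0`.
Here `θ_X` is the unique `A`-linear map with `θ_X ∘ d = X`, `ω·a = op a • ω`, and the
actions on vector fields are `(a·X)(b) = θ_X((db)·a)`, `(X·a)(b) = X(b)·a`. -/
theorem stmt10 (d : A →ₗ[k] Ω)
    (hleib : ∀ a b : A, d (a * b) = a • d b + op b • d a)
    (hspan : Submodule.span A (Set.range ⇑d) = ⊤) :
    (∀ (X : A →ₗ[k] A) (θ : Ω →ₗ[A] A), IsVectorField d X → (∀ c : A, θ (d c) = X c) →
      ∀ a : A,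
      -- (1) ⟨ω·a, X⟩ = ⟨ω, a·X⟩
      (∀ θ' : Ω →ₗ[A] A, (∀ c : A, θ' (d c) = θ (op a • d c)) →
        ∀ ω : Ω, θ (op a • ω) = θ' ω) ∧
      -- (2) left A-linearity: ⟨a·ω, X⟩ = a·⟨ω, X⟩
      (∀ ω : Ω, θ (a • ω) = a * θ ω) ∧
      -- (2) right A-linearity: ⟨ω, X·a⟩ = ⟨ω, X⟩·a
      (∀ θ'' : Ω →ₗ[A] A, (∀ c : A, θ'' (d c) = X c * a) →
        ∀ ω : Ω, θ'' ω = θ ω * a)) ∧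
    -- (3) nondegeneracy in the right component
    (∀ (X : A →ₗ[k] A) (θ : Ω →ₗ[A] A), IsVectorField d X → (∀ c : A, θ (d c) = X c) →
      (∀ ω : Ω, θ ω = 0) → X = 0) := by
  have key : ∀ (f g : Ω →ₗ[A] A), (∀ c : A, f (d c) = g (d c)) → ∀ ω : Ω, f ω = g ω := by
    intro f g h ω
    have : ω ∈ Submodule.span A (Set.range ⇑d) := hspan ▸ Submodule.mem_top
    induction this using Submodule.span_induction with
    | mem x hx => obtain ⟨c, rfl⟩ := hx; exact h c
    | zero => simp
    | add x y _ _ hx hy => simp [hx, hy]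
    | smul c x _ hx => simp [hx]
  refine ⟨fun X θ hX hθ a => ⟨?_, ?_, ?_⟩, ?_⟩
  · intro θ' hθ' ω
    let T : Ω →ₗ[A] Ω :=
      { toFun := fun ω => op a • ω
        map_add' := fun x y => smul_add _ x y
        map_smul' := fun c x => (smul_comm c (op a) x).symm }
    exact (key θ' (θ.comp T) (fun c => hθ' c) ω).symm
  · intro ω; simpa using θ.map_smul a ω
  · intro θ'' hθ'' ω
    let R : Ω →ₗ[A] A :=
      { toFun := fun ω => θ ω * a
        map_add' := fun x y => by simp [add_mul]
        map_smul' := fun c x => by simp [mul_assoc, smul_eq_mul] }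
    exact key θ'' R (fun c => by show θ'' (d c) = θ (d c) * a; rw [hθ'' c, hθ c]) ω
  · intro X θ hX hθ h0
    ext b
    rw [← hθ b, h0, LinearMap.zero_apply]

end
end

section
/- Let k be a commutative ring, A a unital associative k-algebra, and (Ω, d) a first-order differential calculus over A. The evaluation pairing ⟨⟨α ⊗ β, X ⊗ Y⟩⟩ := θ_Y(α·θ_X(β)) is balanced in all slots over A: for all a ∈ A, α, β ∈ Ω, and X, Y ∈ 𝔛_d one has θ_Y((α·a)·θ_X(β)) = θ_Y(α·θ_X(a·β)), θ_Y(α·θ_{a·X}(β)) = θ_Y(α·θ_X(β·a)), and θ_Y(α·θ_{X·a}(β)) = θ_{a·Y}(α·θ_X(β)); hence it descends to a well-defined A-bilinear map Ω ⊗_A Ω ⊗_A 𝔛_d ⊗_A 𝔛_d → A, and the induced map 𝔛_d ⊗_A 𝔛_d → Hom_A(Ω ⊗_A Ω, A) is an A-bimodule morphism. -/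
open MulOpposite

section

variable {k A Ω : Type*} [CommRing k] [Ring A] [Algebra k A]
  [AddCommGroup Ω] [Module k Ω] [Module A Ω] [Module Aᵐᵒᵖ Ω]
  [SMulCommClass A Aᵐᵒᵖ Ω] [IsScalarTower k A Ω] [IsScalarTower k Aᵐᵒᵖ Ω]

/-- Auxiliary: `ω ↦ θ (op a • ω)` is left `A`-linear. -/
def opSmulComp (a : A) (θ : Ω →ₗ[A] A) : Ω →ₗ[A] A where
  toFun ω := θ (op a • ω)
  map_add' x y := by simp only [smul_add, map_add]
  map_smul' c x := by show θ (op a • c • x) = c • θ (op a • x); rw [← smul_comm c (op a) x, map_smul]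

/-- Auxiliary: `ω ↦ θ ω * a` is left `A`-linear. -/
def mulRightComp (a : A) (θ : Ω →ₗ[A] A) : Ω →ₗ[A] A where
  toFun ω := θ ω * a
  map_add' x y := by simp only [map_add, add_mul]
  map_smul' c x := by simp only [map_smul, smul_eq_mul, RingHom.id_apply, mul_assoc]

@[simp] lemma opSmulComp_apply (a : A) (θ : Ω →ₗ[A] A) (ω : Ω) :
    opSmulComp a θ ω = θ (op a • ω) := rfl

@[simp] lemma mulRightComp_apply (a : A) (θ : Ω →ₗ[A] A) (ω : Ω) :
    mulRightComp a θ ω = θ ω * a := rfl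

/-- Proposition 6.11: the evaluation pairing
`⟨⟨α ⊗ β, X ⊗ Y⟩⟩ := θ_Y(α·θ_X(β))` is balanced over `A` in all slots:
`⟨⟨(α·a) ⊗ β, X ⊗ Y⟩⟩ = ⟨⟨α ⊗ (a·β), X ⊗ Y⟩⟩`,
`⟨⟨α ⊗ β, (a·X) ⊗ Y⟩⟩ = ⟨⟨α ⊗ (β·a), X ⊗ Y⟩⟩`,
`⟨⟨α ⊗ β, (X·a) ⊗ Y⟩⟩ = ⟨⟨α ⊗ β, X ⊗ (a·Y)⟩⟩`,
hence descends to an `A`-bilinear map `Ω ⊗_A Ω ⊗_A 𝔛_d ⊗_A 𝔛_d → A`, and the induced map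
`𝔛_d ⊗_A 𝔛_d → Hom_A(Ω ⊗_A Ω, A)` is an `A`-bimodule morphism, in particular
`⟨⟨α ⊗ β, X ⊗ (Y·a)⟩⟩ = ⟨⟨α ⊗ β, X ⊗ Y⟩⟩·a`. Here `θ_X` is the unique `A`-linear map
with `θ_X ∘ d = X`, `ω·a = op a • ω`, `(a·X)(b) = θ_X((db)·a)`, `(X·a)(b) = X(b)·a`. -/

theorem stmt11 (d : A →ₗ[k] Ω)
    (hleib : ∀ a b : A, d (a * b) = a • d b + op b • d a)
    (hspan : Submodule.span A (Set.range ⇑d) = ⊤)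
    (X Y : A →ₗ[k] A) (hX : IsVectorField d X) (hY : IsVectorField d Y)
    (θX θY : Ω →ₗ[A] A)
    (hθX : ∀ c : A, θX (d c) = X c) (hθY : ∀ c : A, θY (d c) = Y c)
    (a : A) (α β : Ω) :
    -- balanced between the two form slots
    (θY (op (θX β) • (op a • α)) = θY (op (θX (a • β)) • α)) ∧
    -- balanced between the forms and the vector fields
    (∀ θ' : Ω →ₗ[A] A, (∀ c : A, θ' (d c) = θX (op a • d c)) →
      θY (op (θ' β) • α) = θY (op (θX (op a • β)) • α)) ∧
    -- balanced between the two vector field slots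
    (∀ θ'' : Ω →ₗ[A] A, (∀ c : A, θ'' (d c) = X c * a) →
      ∀ θY' : Ω →ₗ[A] A, (∀ c : A, θY' (d c) = θY (op a • d c)) →
      θY (op (θ'' β) • α) = θY' (op (θX β) • α)) ∧
    -- the induced map 𝔛_d ⊗_A 𝔛_d → Hom_A(Ω ⊗_A Ω, A) is right A-linear
    (∀ θYa : Ω →ₗ[A] A, (∀ c : A, θYa (d c) = Y c * a) →
      θYa (op (θX β) • α) = θY (op (θX β) • α) * a) := by
  have key : ∀ f g : Ω →ₗ[A] A, (∀ c : A, f (d c) = g (d c)) → ∀ ω, f ω = g ω := by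
    intro f g h ω
    have : f = g := by
      apply LinearMap.ext_on hspan
      rintro x ⟨c, rfl⟩
      exact h c
    rw [this]
  refine ⟨?_, ?_, ?_, ?_⟩
  · rw [smul_smul, ← op_mul, θX.map_smul, smul_eq_mul]
  · intro θ' hθ'
    have : θ' β = θX (op a • β) :=
      key θ' (opSmulComp a θX) (fun c => by rw [hθ' c]; rfl) β
    rw [this]
  · intro θ'' hθ'' θY' hθY'
    have h1 : θ'' β = θX β * a :=
      key θ'' (mulRightComp a θX) (fun c => by rw [hθ'' c, mulRightComp_apply, hθX c]) β
    have h2 : θY' (op (θX β) • α) = θY (op a • op (θX β) • α) :=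
      key θY' (opSmulComp a θY) (fun c => by rw [hθY' c]; rfl) _
    rw [h1, h2, smul_smul, ← op_mul]
  · intro θYa hθYa
    exact key θYa (mulRightComp a θY) (fun c => by rw [hθYa c, mulRightComp_apply, hθY c]) _

end
end

section
/- Let k be a commutative ring, A a unital associative k-algebra, and (Ω, d) a first-order differential calculus over A. Let X_1, …, X_n and Y_1, …, Y_n be vector fields such that for every finite family (a_1, b_1), …, (a_m, b_m) in A × A with ∑_{j=1}^m a_j·(d b_j) = 0 in Ω, one has ∑_{i=1}^n ∑_{j=1}^m θ_{Y_i}((d a_j)·θ_{X_i}(d b_j)) = 0. Then the k-linear map ∑_{i=1}^n Y_i ∘ X_i : A → A is again a vector field: it vanishes on ker(d) and is a first-order differential operator. -/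
open MulOpposite

section

variable {k A Ω : Type*} [CommRing k] [Ring A] [Algebra k A]
  [AddCommGroup Ω] [Module k Ω] [Module A Ω] [Module Aᵐᵒᵖ Ω]
  [SMulCommClass A Aᵐᵒᵖ Ω] [IsScalarTower k A Ω] [IsScalarTower k Aᵐᵒᵖ Ω]

/-- Theorem 6.13: if `X₁, …, Xₙ` and `Y₁, …, Yₙ` are vector fields
such that `∑ᵢ Xᵢ ⊗ Yᵢ` annihilates the second-degree quantum symmetric forms, i.e. for
every finite family `(aⱼ, bⱼ)` with `∑ⱼ aⱼ • d bⱼ = 0` one has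
`∑ᵢ∑ⱼ θ_{Yᵢ}((d aⱼ)·θ_{Xᵢ}(d bⱼ)) = 0`, then the composition `∑ᵢ Yᵢ ∘ Xᵢ` is again
a vector field. Here `θ_X` is the unique `A`-linear map with `θ_X ∘ d = X` and
`ω·c = op c • ω` is the right `A`-action on `Ω`. -/
theorem stmt12 (d : A →ₗ[k] Ω)
    (hleib : ∀ a b : A, d (a * b) = a • d b + op b • d a)
    (hspan : Submodule.span A (Set.range ⇑d) = ⊤)
    (n : ℕ) (X Y : Fin n → A →ₗ[k] A)
    (hX : ∀ i, IsVectorField d (X i)) (hY : ∀ i, IsVectorField d (Y i))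
    (θX θY : Fin n → (Ω →ₗ[A] A))
    (hθX : ∀ i, ∀ c : A, θX i (d c) = X i c)
    (hθY : ∀ i, ∀ c : A, θY i (d c) = Y i c)
    (hasym : ∀ (m : ℕ) (a b : Fin m → A), ∑ j, a j • d (b j) = 0 →
      ∑ i, ∑ j, θY i (op (θX i (d (b j))) • d (a j)) = 0) :
    IsVectorField d (∑ i, (Y i) ∘ₗ (X i)) := by
  constructor
  · intro a ha
    have hXa : ∀ i, X i a = 0 := fun i => (hX i).1 a ha
    simp [LinearMap.sum_apply, hXa]
  · intro m a b hab hd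
    have h1 : ∀ i j, a j * Y i (X i (b j)) =
        θY i (d (a j * X i (b j))) - θY i (op (θX i (d (b j))) • d (a j)) := by
      intro i j
      rw [hleib, map_add, map_smul, smul_eq_mul, hθY, hθX, add_sub_cancel_right]
    have h2 : ∀ i, ∑ j, a j * X i (b j) = 0 := fun i => (hX i).2 m a b hab hd
    calc ∑ j, a j * (∑ i, (Y i) ∘ₗ (X i)) (b j)
        = ∑ i, ∑ j, a j * Y i (X i (b j)) := by
          rw [Finset.sum_comm]
          simp [LinearMap.sum_apply, Finset.mul_sum]
      _ = ∑ i, (θY i (d (∑ j, a j * X i (b j)))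
            - ∑ j, θY i (op (θX i (d (b j))) • d (a j))) := by
          refine Finset.sum_congr rfl fun i _ => ?_
          rw [map_sum, map_sum, ← Finset.sum_sub_distrib]
          exact Finset.sum_congr rfl fun j _ => h1 i j
      _ = 0 := by
          rw [Finset.sum_sub_distrib, hasym m a b hd]
          simp [h2]

end
end

section
/- Let R be a commutative ring and A a commutative R-algebra, equipped with the Kähler differential calculus (Ω[A⁄R], D). Let X and Y be vector fields. Then: (1) for every finite family (a_1, b_1), …, (a_m, b_m) in A × A with ∑_j a_j·(D b_j) = 0 in Ω[A⁄R], one has ∑_{j=1}^m (X(b_j)·Y(a_j) − Y(b_j)·X(a_j)) = 0, i.e. X ⊗ Y − Y ⊗ X satisfies the antisymmetry condition defining Asym(𝔛); and (2) consequently the commutator X ∘ Y − Y ∘ X is again a vector field, so the quantum Lie bracket induced by the canonical antisymmetric projector X ⊗ Y ↦ X ⊗ Y − Y ⊗ X coincides with the classical commutator bracket. -/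
/-!
A vector field in this sense is the same thing as an `R`-derivation of `A`: the
first-order condition applied to the family `(1, ab), (-a, b), (-b, a), (ab, 1)` is the
Leibniz rule, and conversely every derivation factors through `Ω[A⁄R]`. The antisymmetry
identity then comes from differentiating `∑ aⱼ X(bⱼ) = 0` by `Y` and `∑ aⱼ Y(bⱼ) = 0`
by `X`: the difference is the antisymmetric sum plus `∑ aⱼ [X, Y](bⱼ)`, which vanishes
because the commutator of derivations is a derivation.
-/

section

variable (R A : Type*) [CommRing R] [CommRing A] [Algebra R A]

/-- An `R`-linear map `X : A → A` is a vector field for the Kähler differential calculus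
`(Ω[A⁄R], D)` if it vanishes on `ker D` and is a first-order differential operator:
for every finite family `(aᵢ, bᵢ)` with `∑ aᵢbᵢ = 0` and `∑ aᵢ • D bᵢ = 0` one has
`∑ aᵢ * X bᵢ = 0`. -/
def IsVectorFieldKaehler (X : A →ₗ[R] A) : Prop :=
  (∀ a : A, KaehlerDifferential.D R A a = 0 → X a = 0) ∧
  ∀ (n : ℕ) (a b : Fin n → A),
    ∑ i, a i * b i = 0 → ∑ i, a i • KaehlerDifferential.D R A (b i) = 0 →
      ∑ i, a i * X (b i) = 0

variable {R A}

open KaehlerDifferential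

theorem Derivation.sum_smul_eq_zero_of_sum_smul_D_eq_zero {M : Type*} [AddCommGroup M]
    [Module R M] [Module A M] [IsScalarTower R A M] (d : Derivation R A M)
    {ι : Type*} [Fintype ι] {a b : ι → A} (h : ∑ i, a i • D R A (b i) = 0) :
    ∑ i, a i • d (b i) = 0 := by
  simpa only [map_sum, LinearMap.map_smul, Derivation.liftKaehlerDifferential_comp_D,
    map_zero] using congrArg d.liftKaehlerDifferential h

theorem Derivation.isVectorFieldKaehler (d : Derivation R A A) :
    IsVectorFieldKaehler R A d.toLinearMap := by
  refine ⟨fun c hc => ?_, fun _ a b _ h => ?_⟩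
  · simpa [hc] using (d.liftKaehlerDifferential_comp_D c).symm
  · exact d.sum_smul_eq_zero_of_sum_smul_D_eq_zero h

def IsVectorFieldKaehler.toDerivation {X : A →ₗ[R] A} (hX : IsVectorFieldKaehler R A X) :
    Derivation R A A where
  toLinearMap := X
  map_one_eq_zero' := hX.1 1 (D R A).map_one_eq_zero
  leibniz' a b := by
    have hX1 : X 1 = 0 := hX.1 1 (D R A).map_one_eq_zero
    have key := hX.2 4 ![1, -a, -b, a * b] ![a * b, b, a, 1]
      (by simp only [Fin.sum_univ_four, Matrix.cons_val]; ring)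
      (by
        simp only [Fin.sum_univ_four, Matrix.cons_val, Derivation.leibniz,
          Derivation.map_one_eq_zero, smul_zero, one_smul, neg_smul]
        abel)
    simp only [Fin.sum_univ_four, Matrix.cons_val, hX1, mul_zero, add_zero] at key
    simp only [smul_eq_mul]
    linear_combination key

theorem Derivation.sum_mul_sub_mul_eq_zero (d e : Derivation R A A) {ι : Type*} [Fintype ι]
    {a b : ι → A} (h : ∑ i, a i • D R A (b i) = 0) :
    ∑ i, (d (b i) * e (a i) - e (b i) * d (a i)) = 0 := by
  have hd : ∑ i, a i * d (b i) = 0 := d.sum_smul_eq_zero_of_sum_smul_D_eq_zero h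
  have he : ∑ i, a i * e (b i) = 0 := e.sum_smul_eq_zero_of_sum_smul_D_eq_zero h
  have hde : ∑ i, a i * ⁅d, e⁆ (b i) = 0 := ⁅d, e⁆.sum_smul_eq_zero_of_sum_smul_D_eq_zero h
  have ehd : ∑ i, (a i * e (d (b i)) + d (b i) * e (a i)) = 0 := by
    simpa [Derivation.leibniz, smul_eq_mul, add_comm, mul_comm] using congrArg e hd
  have dhe : ∑ i, (a i * d (e (b i)) + e (b i) * d (a i)) = 0 := by
    simpa [Derivation.leibniz, smul_eq_mul, add_comm, mul_comm] using congrArg d he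
  simp only [Derivation.commutator_apply, mul_sub] at hde
  calc ∑ i, (d (b i) * e (a i) - e (b i) * d (a i))
      = ∑ i, (a i * e (d (b i)) + d (b i) * e (a i))
          - ∑ i, (a i * d (e (b i)) + e (b i) * d (a i))
          + ∑ i, (a i * d (e (b i)) - a i * e (d (b i))) := by
        simp only [← Finset.sum_sub_distrib, ← Finset.sum_add_distrib]
        exact Finset.sum_congr rfl fun i _ => by ring
    _ = 0 := by rw [ehd, dhe, hde]; ring

variable (R A)

/-- Proposition 6.17, classical correspondence, commutative-algebra
form: for vector fields `X`, `Y` of the Kähler differential calculus `(Ω[A⁄R], D)` of a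
commutative `R`-algebra `A`:
(1) `X ⊗ Y - Y ⊗ X` satisfies the antisymmetry condition defining `Asym(𝔛)`: for every
finite family `(aⱼ, bⱼ)` with `∑ⱼ aⱼ • D bⱼ = 0` one has
`∑ⱼ (X(bⱼ)·Y(aⱼ) - Y(bⱼ)·X(aⱼ)) = 0`; and
(2) consequently the commutator `X ∘ Y - Y ∘ X` is again a vector field, so the quantum
Lie bracket induced by the canonical antisymmetric projector `X ⊗ Y ↦ X ⊗ Y - Y ⊗ X`
coincides with the classical commutator bracket. -/
theorem stmt13 (X Y : A →ₗ[R] A)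
    (hX : IsVectorFieldKaehler R A X) (hY : IsVectorFieldKaehler R A Y) :
    (∀ (m : ℕ) (a b : Fin m → A),
      ∑ j, a j • KaehlerDifferential.D R A (b j) = 0 →
      ∑ j, (X (b j) * Y (a j) - Y (b j) * X (a j)) = 0) ∧
    IsVectorFieldKaehler R A (X ∘ₗ Y - Y ∘ₗ X) := by
  refine ⟨fun _ _ _ h => hX.toDerivation.sum_mul_sub_mul_eq_zero hY.toDerivation h, ?_⟩
  have hbracket : X ∘ₗ Y - Y ∘ₗ X = (⁅hX.toDerivation, hY.toDerivation⁆ : Derivation R A A) :=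
    rfl
  rw [hbracket]
  exact Derivation.isVectorFieldKaehler _

end
end
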